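/- If γ:[0,1]→(0,1) is piecewise constant with values α₁<...<α_{n+1} on intervals [r_{i−1}, r_i) (and [r_n, 1]) where 0=r₀<r₁<...<r_n<r_{n+1}=1, then for all integrable X, Y with Y ≥ 0 a.s., RecAVaR_γ(X,Y) = max over i=1,...,n+1 of AVaR_{α_i}(X + (1−r_i)Y). -/

import Mathlib

/-!
On `[r_{i-1}, r_i)` the level is the constant `α_i` and, as `Y ≥ 0`, the position
`X + (1 - λ) Y` decreases in `λ`; so `AVaR_{α_i}(X + (1 - λ) Y)` increases in `λ` and its supremum
over the interval is its limit as `λ ↑ r_i`. That limit is `AVaR_{α_i}(X + (1 - r_i) Y)`: along a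
decreasing sequence of positions each `VaR_β` converges monotonically (continuity of measure from
below), and monotone convergence passes this to the integral defining AVaR.
-/

open MeasureTheory

variable {Ω : Type*} [MeasurableSpace Ω]

/-- Value at Risk at level `α`, valued in the extended reals:
`VaR_α(X) = inf { x : ℝ | P(X + x < 0) ≤ α }`. -/
noncomputable def VaR (μ : Measure Ω) (α : ℝ) (X : Ω → ℝ) : EReal :=
  sInf {y : EReal | ∃ x : ℝ, y = (x : EReal) ∧ μ {ω | X ω + x < 0} ≤ ENNReal.ofReal α}

/-- Recovery Value at Risk with level function `γ`:
`RecVaR_γ(X,Y) = sup_{λ ∈ [0,1]} VaR_{γ(λ)}(X + (1-λ)Y)`. -/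
noncomputable def RecVaR (μ : Measure Ω) (γ : ℝ → ℝ) (X Y : Ω → ℝ) : EReal :=
  ⨆ l : Set.Icc (0:ℝ) 1, VaR μ (γ l) (fun ω => X ω + (1 - (l : ℝ)) * Y ω)

/-- Average Value at Risk at level `α`:
`AVaR_α(X) = (1/α) ∫_0^α VaR_β(X) dβ`. -/
noncomputable def AVaR (μ : Measure Ω) (α : ℝ) (X : Ω → ℝ) : ℝ :=
  (1 / α) * ∫ β in (0:ℝ)..α, (VaR μ β X).toReal

/-- Recovery Average Value at Risk with level function `γ`:
`RecAVaR_γ(X,Y) = sup_{λ ∈ [0,1]} AVaR_{γ(λ)}(X + (1-λ)Y)`. -/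
noncomputable def RecAVaR (μ : Measure Ω) (γ : ℝ → ℝ) (X Y : Ω → ℝ) : EReal :=
  ⨆ l : Set.Icc (0:ℝ) 1, ((AVaR μ (γ l) (fun ω => X ω + (1 - (l : ℝ)) * Y ω) : ℝ) : EReal)

open Set Filter Topology

lemma Fin.exists_castSucc_le_lt_succ {α : Type*} [LinearOrder α] {l : α} :
    ∀ {n : ℕ} (r : Fin (n + 2) → α), r 0 ≤ l → l < r (Fin.last (n + 1)) →
      ∃ i : Fin (n + 1), r i.castSucc ≤ l ∧ l < r i.succ
  | 0, _, h0, h1 => ⟨0, h0, h1⟩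
  | n + 1, r, h0, h1 => by
    by_cases h : l < r (Fin.last (n + 1)).castSucc
    · obtain ⟨i, hi⟩ := Fin.exists_castSucc_le_lt_succ (r ∘ Fin.castSucc) h0 h
      exact ⟨i.castSucc, hi.1, by rw [Fin.succ_castSucc]; exact hi.2⟩
    · exact ⟨Fin.last (n + 1), not_lt.1 h, by rwa [Fin.succ_last]⟩

section VaR

variable {μ : Measure Ω} {Z W : Ω → ℝ} {β x : ℝ}

lemma VaR_le_coe (h : μ {ω | Z ω + x < 0} ≤ ENNReal.ofReal β) : VaR μ β Z ≤ x :=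
  sInf_le ⟨x, rfl, h⟩

lemma ofReal_lt_measure_of_coe_lt_VaR (h : (x : EReal) < VaR μ β Z) :
    ENNReal.ofReal β < μ {ω | Z ω + x < 0} :=
  lt_of_not_ge fun h' => h.not_ge (VaR_le_coe h')

lemma coe_le_VaR (h : ENNReal.ofReal β < μ {ω | Z ω + x < 0}) : (x : EReal) ≤ VaR μ β Z := by
  refine le_sInf ?_
  rintro _ ⟨y, rfl, hy⟩
  refine EReal.coe_le_coe_iff.2 (le_of_not_gt fun hyx => ?_)
  have hsub : {ω | Z ω + x < 0} ⊆ {ω | Z ω + y < 0} := fun ω (hω : Z ω + x < 0) =>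
    show Z ω + y < 0 by linarith
  exact h.not_ge ((measure_mono hsub).trans hy)

lemma VaR_ne_top [IsFiniteMeasure μ] (hZ : AEMeasurable Z μ) (hβ : 0 < β) : VaR μ β Z ≠ ⊤ := by
  have hanti : Antitone fun n : ℕ => {ω | Z ω + n < 0} := fun m n hmn ω (hω : Z ω + n < 0) =>
    show Z ω + m < 0 by linarith [(Nat.cast_le (α := ℝ)).2 hmn]
  have hempty : ⋂ n : ℕ, {ω | Z ω + n < 0} = ∅ := by
    refine eq_empty_of_forall_notMem fun ω hω => ?_
    obtain ⟨n, hn⟩ := exists_nat_gt (-Z ω)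
    linarith [show Z ω + n < 0 from mem_iInter.1 hω n]
  have htend := tendsto_measure_iInter_atTop (μ := μ)
    (fun n => nullMeasurableSet_lt (hZ.add_const _) aemeasurable_const) hanti
    ⟨0, measure_ne_top μ _⟩
  rw [hempty, measure_empty] at htend
  obtain ⟨n, hn⟩ := (htend.eventually_lt_const (ENNReal.ofReal_pos.2 hβ)).exists
  exact ne_top_of_le_ne_top (EReal.coe_ne_top n) (VaR_le_coe hn.le)

lemma VaR_ne_bot [IsProbabilityMeasure μ] (hβ : β < 1) : VaR μ β Z ≠ ⊥ := by
  have hmono : Monotone fun n : ℕ => {ω | Z ω + -(n : ℝ) < 0} :=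
    fun m n hmn ω (hω : Z ω + -(m : ℝ) < 0) =>
      show Z ω + -(n : ℝ) < 0 by linarith [(Nat.cast_le (α := ℝ)).2 hmn]
  have huniv : ⋃ n : ℕ, {ω | Z ω + -(n : ℝ) < 0} = univ := by
    refine eq_univ_of_forall fun ω => mem_iUnion.2 ?_
    obtain ⟨n, hn⟩ := exists_nat_gt (Z ω)
    exact ⟨n, show Z ω + -(n : ℝ) < 0 by linarith⟩
  have htend := tendsto_measure_iUnion_atTop (μ := μ) hmono
  rw [huniv, measure_univ] at htend
  obtain ⟨n, hn⟩ := (htend.eventually_const_lt (ENNReal.ofReal_lt_one.2 hβ)).exists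
  exact ne_bot_of_le_ne_bot (EReal.coe_ne_bot _) (coe_le_VaR hn)

lemma VaR_le_VaR_of_ae_le (h : Z ≤ᵐ[μ] W) : VaR μ β W ≤ VaR μ β Z := by
  refine sInf_le_sInf ?_
  rintro _ ⟨x, rfl, hx⟩
  refine ⟨x, rfl, le_trans (measure_mono_ae ?_) hx⟩
  filter_upwards [h] with ω hω (hW : W ω + x < 0)
  show Z ω + x < 0
  linarith

lemma antitone_VaR : Antitone fun β => VaR μ β Z := by
  intro β β' hβ
  refine sInf_le_sInf ?_
  rintro _ ⟨x, rfl, hx⟩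
  exact ⟨x, rfl, hx.trans (ENNReal.ofReal_le_ofReal hβ)⟩

lemma measurable_VaR_toReal : Measurable fun β => (VaR μ β Z).toReal :=
  antitone_VaR.measurable.ereal_toReal

lemma VaR_toReal_le_of_ae_le [IsProbabilityMeasure μ] (hZ : AEMeasurable Z μ) (hβ0 : 0 < β)
    (hβ1 : β < 1) (h : Z ≤ᵐ[μ] W) : (VaR μ β W).toReal ≤ (VaR μ β Z).toReal :=
  EReal.toReal_le_toReal (VaR_le_VaR_of_ae_le h) (VaR_ne_bot hβ1) (VaR_ne_top hZ hβ0)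

lemma tendsto_VaR_of_ae_antitone {Z : ℕ → Ω → ℝ} {Z₀ : Ω → ℝ}
    (hmono : ∀ᵐ ω ∂μ, Antitone fun k => Z k ω)
    (hlim : ∀ᵐ ω ∂μ, Tendsto (fun k => Z k ω) atTop (𝓝 (Z₀ ω))) :
    Tendsto (fun k => VaR μ β (Z k)) atTop (𝓝 (VaR μ β Z₀)) := by
  have hle : ∀ k, VaR μ β (Z k) ≤ VaR μ β Z₀ := fun k => VaR_le_VaR_of_ae_le <| by
    filter_upwards [hmono, hlim] with ω hω hωlim using hω.le_of_tendsto hωlim k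
  have hVaR_mono : Monotone fun k => VaR μ β (Z k) := fun j k hjk =>
    VaR_le_VaR_of_ae_le <| by filter_upwards [hmono] with ω hω using hω hjk
  suffices VaR μ β Z₀ ≤ ⨆ k, VaR μ β (Z k) by
    rw [← le_antisymm (iSup_le hle) this]
    exact tendsto_atTop_iSup hVaR_mono
  refine EReal.ge_of_forall_gt_iff_ge.1 fun x hx => ?_
  set S : ℕ → Set Ω := fun k => {ω | Z k ω + x < 0}
  have hcover : {ω | Z₀ ω + x < 0} ≤ᵐ[μ] ⋃ k, S k := by
    filter_upwards [hlim] with ω hω (hω' : Z₀ ω + x < 0)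
    obtain ⟨k, hk⟩ := ((hω.add_const x).eventually_lt_const hω').exists
    exact mem_iUnion.2 ⟨k, hk⟩
  have hβS : ENNReal.ofReal β < μ (⋃ k, S k) :=
    (ofReal_lt_measure_of_coe_lt_VaR hx).trans_le (measure_mono_ae hcover)
  obtain ⟨k, hk⟩ := (tendsto_measure_iUnion_accumulate.eventually_const_lt hβS).exists
  have hacc : accumulate S k ≤ᵐ[μ] S k := by
    filter_upwards [hmono] with ω hω hmem
    obtain ⟨j, hjk, (hj : Z j ω + x < 0)⟩ := mem_accumulate.1 hmem
    exact show Z k ω + x < 0 by linarith [hω hjk]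
  exact (coe_le_VaR (hk.trans_le (measure_mono_ae hacc))).trans (le_iSup (fun k => VaR μ β (Z k)) k)

end VaR

section Integrability

variable {μ : Measure Ω} [IsProbabilityMeasure μ] {Z : Ω → ℝ} {α : ℝ}

lemma volume_lt_VaR_toReal_le (hα : α < 1) (t : ℝ) :
    volume ({β | t < (VaR μ β Z).toReal} ∩ Ioc 0 α) ≤ μ {ω | Z ω + t < 0} := by
  calc volume ({β | t < (VaR μ β Z).toReal} ∩ Ioc 0 α)
      ≤ volume (Ioo 0 (μ {ω | Z ω + t < 0}).toReal) := by
        refine measure_mono fun β ⟨(htβ : t < _), hβ⟩ => ⟨hβ.1, ?_⟩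
        have htV : (t : EReal) < VaR μ β Z :=
          (EReal.coe_lt_coe_iff.2 htβ).trans_le
            (EReal.coe_toReal_le (VaR_ne_bot (hβ.2.trans_lt hα)))
        exact (ENNReal.ofReal_lt_iff_lt_toReal hβ.1.le (measure_ne_top μ _)).1
          (ofReal_lt_measure_of_coe_lt_VaR htV)
    _ = μ {ω | Z ω + t < 0} := by
        rw [Real.volume_Ioo, sub_zero, ENNReal.ofReal_toReal (measure_ne_top μ _)]

lemma setOf_lt_max_zero {ι : Type*} (f : ι → ℝ) {t : ℝ} (ht : 0 < t) :
    {i | t < max (f i) 0} = {i | t < f i} := by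
  ext i
  simp [ht.not_gt]

/-- Layer cake on both sides: `VaR_β(Z) > t` forces `β < P(Z + t < 0)`. -/
lemma lintegral_VaR_toReal_le (hZ : AEMeasurable Z μ) (hα : α < 1) :
    ∫⁻ β in Ioc 0 α, ENNReal.ofReal (VaR μ β Z).toReal ≤ ∫⁻ ω, ENNReal.ofReal (-Z ω) ∂μ := by
  have hlt_neg : ∀ t, {ω | Z ω + t < 0} = {ω | t < -Z ω} := fun t => by
    ext ω; exact show Z ω + t < 0 ↔ t < -Z ω by constructor <;> intro h <;> linarith
  calc ∫⁻ β in Ioc 0 α, ENNReal.ofReal (VaR μ β Z).toReal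
      = ∫⁻ β in Ioc 0 α, ENNReal.ofReal (max (VaR μ β Z).toReal 0) := by simp
    _ = ∫⁻ t in Ioi 0, volume.restrict (Ioc 0 α) {β | t < max (VaR μ β Z).toReal 0} :=
        lintegral_eq_lintegral_meas_lt _ (ae_of_all _ fun _ => le_max_right _ _)
          (measurable_VaR_toReal.max measurable_const).aemeasurable
    _ ≤ ∫⁻ t in Ioi 0, μ {ω | t < max (-Z ω) 0} := by
        refine setLIntegral_mono' measurableSet_Ioi fun t (ht : 0 < t) => ?_
        rw [setOf_lt_max_zero _ ht, setOf_lt_max_zero _ ht, ← hlt_neg,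
          Measure.restrict_apply' measurableSet_Ioc]
        exact volume_lt_VaR_toReal_le hα t
    _ = ∫⁻ ω, ENNReal.ofReal (-Z ω) ∂μ := by
        rw [← lintegral_eq_lintegral_meas_lt (f := fun ω => max (-Z ω) 0) _
          (ae_of_all _ fun _ => le_max_right _ _) (hZ.neg.max aemeasurable_const)]
        simp

lemma integrableOn_VaR_toReal (hZ : Integrable Z μ) (hα : α < 1) :
    IntegrableOn (fun β => (VaR μ β Z).toReal) (Ioc 0 α) := by
  have hmeas : AEStronglyMeasurable (fun β => (VaR μ β Z).toReal) (volume.restrict (Ioc 0 α)) :=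
    measurable_VaR_toReal.aestronglyMeasurable
  have hposPart : IntegrableOn (fun β => max (VaR μ β Z).toReal 0) (Ioc 0 α) := by
    refine ⟨(measurable_VaR_toReal.max measurable_const).aestronglyMeasurable, ?_⟩
    refine (hasFiniteIntegral_iff_ofReal (ae_of_all _ fun β => le_max_right _ _)).2 ?_
    simpa using (lintegral_VaR_toReal_le hZ.aemeasurable hα).trans_lt hZ.neg.lintegral_lt_top
  refine integrable_of_le_of_le hmeas ?_ (ae_of_all _ fun β => le_max_left _ 0)
    (integrableOn_const (C := (VaR μ α Z).toReal) (by simp)) hposPart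
  refine ae_restrict_of_forall_mem measurableSet_Ioc fun β hβ => ?_
  exact EReal.toReal_le_toReal (antitone_VaR hβ.2) (VaR_ne_bot hα) (VaR_ne_top hZ.aemeasurable hβ.1)

end Integrability

section AVaR

variable {μ : Measure Ω} [IsProbabilityMeasure μ] {Z W : Ω → ℝ} {α : ℝ}

omit [IsProbabilityMeasure μ] in
lemma AVaR_eq_setIntegral (hα : 0 ≤ α) :
    AVaR μ α Z = (1 / α) * ∫ β in Ioc 0 α, (VaR μ β Z).toReal := by
  rw [AVaR, intervalIntegral.integral_of_le hα]

lemma AVaR_le_AVaR_of_ae_le (hZ : Integrable Z μ) (hW : Integrable W μ) (hα0 : 0 < α)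
    (hα1 : α < 1) (h : Z ≤ᵐ[μ] W) : AVaR μ α W ≤ AVaR μ α Z := by
  rw [AVaR_eq_setIntegral hα0.le, AVaR_eq_setIntegral hα0.le]
  refine mul_le_mul_of_nonneg_left ?_ (by positivity)
  refine setIntegral_mono_on (integrableOn_VaR_toReal hW hα1) (integrableOn_VaR_toReal hZ hα1)
    measurableSet_Ioc fun β hβ => ?_
  exact VaR_toReal_le_of_ae_le hZ.aemeasurable hβ.1 (hβ.2.trans_lt hα1) h

lemma tendsto_AVaR_of_ae_antitone {Z : ℕ → Ω → ℝ} {Z₀ : Ω → ℝ} (hZ : ∀ k, Integrable (Z k) μ)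
    (hZ₀ : Integrable Z₀ μ) (hmono : ∀ᵐ ω ∂μ, Antitone fun k => Z k ω)
    (hlim : ∀ᵐ ω ∂μ, Tendsto (fun k => Z k ω) atTop (𝓝 (Z₀ ω))) (hα0 : 0 < α) (hα1 : α < 1) :
    Tendsto (fun k => AVaR μ α (Z k)) atTop (𝓝 (AVaR μ α Z₀)) := by
  simp only [AVaR_eq_setIntegral hα0.le]
  refine .const_mul _ (integral_tendsto_of_tendsto_of_monotone
    (fun k => integrableOn_VaR_toReal (hZ k) hα1) (integrableOn_VaR_toReal hZ₀ hα1) ?_ ?_)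
  · refine ae_restrict_of_forall_mem measurableSet_Ioc fun β hβ j k hjk => ?_
    refine VaR_toReal_le_of_ae_le (hZ k).aemeasurable hβ.1 (hβ.2.trans_lt hα1) ?_
    filter_upwards [hmono] with ω hω using hω hjk
  · refine ae_restrict_of_forall_mem measurableSet_Ioc fun β hβ => ?_
    exact (EReal.tendsto_toReal (VaR_ne_top hZ₀.aemeasurable hβ.1)
      (VaR_ne_bot (hβ.2.trans_lt hα1))).comp (tendsto_VaR_of_ae_antitone hmono hlim)

end AVaR

section Recovery

variable {μ : Measure Ω} [IsProbabilityMeasure μ] {X Y : Ω → ℝ} {α : ℝ}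

omit [IsProbabilityMeasure μ] in
lemma ae_antitone_add_one_sub_mul (hY0 : ∀ᵐ ω ∂μ, 0 ≤ Y ω) :
    ∀ᵐ ω ∂μ, Antitone fun l : ℝ => X ω + (1 - l) * Y ω := by
  filter_upwards [hY0] with ω hω l l' hll'
  have := mul_le_mul_of_nonneg_right (sub_le_sub_left hll' 1) hω
  exact show X ω + (1 - l') * Y ω ≤ X ω + (1 - l) * Y ω by linarith

lemma monotone_AVaR_add_one_sub_mul (hX : Integrable X μ) (hY : Integrable Y μ)
    (hY0 : ∀ᵐ ω ∂μ, 0 ≤ Y ω) (hα0 : 0 < α) (hα1 : α < 1) :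
    Monotone fun l : ℝ => AVaR μ α fun ω => X ω + (1 - l) * Y ω := fun _ _ hll' =>
  AVaR_le_AVaR_of_ae_le (hX.add (hY.const_mul _)) (hX.add (hY.const_mul _)) hα0 hα1
    ((ae_antitone_add_one_sub_mul hY0).mono fun _ hω => hω hll')

lemma tendsto_AVaR_add_one_sub_mul (hX : Integrable X μ) (hY : Integrable Y μ)
    (hY0 : ∀ᵐ ω ∂μ, 0 ≤ Y ω) (hα0 : 0 < α) (hα1 : α < 1) {u : ℕ → ℝ} {c : ℝ}
    (hu : Monotone u) (hlim : Tendsto u atTop (𝓝 c)) :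
    Tendsto (fun k => AVaR μ α fun ω => X ω + (1 - u k) * Y ω) atTop
      (𝓝 (AVaR μ α fun ω => X ω + (1 - c) * Y ω)) :=
  tendsto_AVaR_of_ae_antitone (fun _ => hX.add (hY.const_mul _)) (hX.add (hY.const_mul _))
    ((ae_antitone_add_one_sub_mul hY0).mono fun _ hω => hω.comp_monotone hu)
    (ae_of_all _ fun ω => ((tendsto_const_nhds.sub hlim).mul_const (Y ω)).const_add (X ω))
    hα0 hα1

end Recovery

theorem recAVaR_piecewise_constant_general (μ : Measure Ω) [IsProbabilityMeasure μ]
    (n : ℕ) (r : Fin (n + 2) → ℝ) (a : Fin (n + 1) → ℝ)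
    (hr : StrictMono r) (hr0 : r 0 = 0) (hr1 : r (Fin.last (n + 1)) = 1)
    (ha : StrictMono a) (ha0 : 0 < a 0) (ha1 : a (Fin.last n) < 1)
    (γ : ℝ → ℝ)
    (hγ : ∀ (i : Fin (n + 1)) (l : ℝ), r i.castSucc ≤ l → l < r i.succ → γ l = a i)
    (hγ1 : γ 1 = a (Fin.last n))
    (X Y : Ω → ℝ)
    (hXi : Integrable X μ) (hYi : Integrable Y μ)
    (hY0 : ∀ᵐ ω ∂μ, 0 ≤ Y ω) :
    RecAVaR μ γ X Y =
      ⨆ i : Fin (n + 1),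
        ((AVaR μ (a i) (fun ω => X ω + (1 - r i.succ) * Y ω) : ℝ) : EReal) := by
  have ha_pos : ∀ i, 0 < a i := fun i => ha0.trans_le (ha.monotone i.zero_le)
  have ha_lt_one : ∀ i, a i < 1 := fun i => (ha.monotone i.le_last).trans_lt ha1
  refine le_antisymm (iSup_le fun ⟨l, hl0, hl1⟩ => ?_) (iSup_le fun i => ?_)
  · obtain ⟨i, hγl, hli⟩ : ∃ i, γ l = a i ∧ l ≤ r i.succ := by
      rcases hl1.lt_or_eq with hl1 | rfl
      · obtain ⟨i, hil, hli⟩ := Fin.exists_castSucc_le_lt_succ r (hr0 ▸ hl0) (hr1 ▸ hl1)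
        exact ⟨i, hγ i l hil hli, hli.le⟩
      · exact ⟨Fin.last n, hγ1, by rw [Fin.succ_last, hr1]⟩
    refine le_iSup_of_le i (EReal.coe_le_coe_iff.2 ?_)
    rw [hγl]
    exact monotone_AVaR_add_one_sub_mul hXi hYi hY0 (ha_pos i) (ha_lt_one i) hli
  · obtain ⟨u, hu_mono, hu_mem, hu_lim⟩ :=
      exists_seq_strictMono_tendsto' (hr (Fin.castSucc_lt_succ (i := i)))
    have hu_Icc : ∀ k, u k ∈ Icc (0 : ℝ) 1 := fun k =>
      ⟨(hr0 ▸ hr.monotone i.castSucc.zero_le).trans (hu_mem k).1.le,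
        (hu_mem k).2.le.trans (hr1 ▸ hr.monotone i.succ.le_last)⟩
    refine le_of_tendsto' ((continuous_coe_real_ereal.tendsto _).comp
      (tendsto_AVaR_add_one_sub_mul hXi hYi hY0 (ha_pos i) (ha_lt_one i) hu_mono.monotone
        hu_lim)) fun k => le_iSup_of_le ⟨u k, hu_Icc k⟩ (le_of_eq ?_)
    simp only [hγ i (u k) (hu_mem k).1.le (hu_mem k).2, Function.comp_apply]

/-- if `γ` is piecewise constant with values `a 0 < ... < a n` on the
intervals `[r_{i-1}, r_i)` determined by `0 = r 0 < ... < r (n+1) = 1` (last interval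
closed at `1`), then for all integrable `X, Y` with `Y ≥ 0` a.s.,
`RecAVaR_γ(X,Y) = max_i AVaR_{α_i}(X + (1 - r_i) Y)`. -/
theorem recAVaR_piecewise_constant (μ : Measure Ω) [IsProbabilityMeasure μ]
    (n : ℕ) (r : Fin (n + 2) → ℝ) (a : Fin (n + 1) → ℝ)
    (hr : StrictMono r) (hr0 : r 0 = 0) (hr1 : r (Fin.last (n + 1)) = 1)
    (ha : StrictMono a) (ha0 : 0 < a 0) (ha1 : a (Fin.last n) < 1)
    (γ : ℝ → ℝ)
    (hγ : ∀ (i : Fin (n + 1)) (l : ℝ), r i.castSucc ≤ l → l < r i.succ → γ l = a i)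
    (hγ1 : γ 1 = a (Fin.last n))
    (X Y : Ω → ℝ) (hX : Measurable X) (hY : Measurable Y)
    (hXi : Integrable X μ) (hYi : Integrable Y μ)
    (hY0 : ∀ᵐ ω ∂μ, 0 ≤ Y ω) :
    RecAVaR μ γ X Y =
      ⨆ i : Fin (n + 1),
        ((AVaR μ (a i) (fun ω => X ω + (1 - r i.succ) * Y ω) : ℝ) : EReal) :=
  recAVaR_piecewise_constant_general μ n r a hr hr0 hr1 ha ha0 ha1 γ hγ hγ1 X Y hXi hYi hY0
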